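/- In the subdivided-K_5 instance with α = 5, every feasible fractional solution of the path-based LP relaxation (PB) has objective value strictly greater than 5. Combined with the feasible (AB)-solution of value 5, this shows the LP relaxation of the arc-based formulation (AB) is strictly weaker than that of the path-based formulation (PB), even on unweighted instances with unreachable-variable fixing. -/

import Mathlib

/-!
Each subdivision vertex has degree two, so every path to a neighbour leaves it through one of its
two cycle edges, and these two edges carry total weight at least `1`. If the objective is at most
`5` and the chords carry total weight `c`, then `s(0, 1)` and `s(1, 2)` together carry at most
`1 - c`. On the other hand, a chordless path of length at most `5 = α · d(0, 4)` from `0` to `4`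
is the arc `0, 1, 2, 3, 4`, so each of `s(0, 1)` and `s(1, 2)` carries at least `1 - c`. Hence
`c ≥ 1`, and the two edges at vertex `1` carry nothing, a contradiction.
-/

open scoped BigOperators

noncomputable section

variable {V : Type*}

/-- The weight of a walk: the sum of the (real) weights of its edges. -/
def walkWeight {G : SimpleGraph V} (w : Sym2 V → ℝ) {u v : V} (p : G.Walk u v) : ℝ :=
  (p.edges.map w).sum

/-- `P_uv`: the set of `u`-`v` paths of weight at most the bound `B u v`. -/
def pathSet (G : SimpleGraph V) (w : Sym2 V → ℝ) (B : V → V → ℝ) (u v : V) :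
    Set (G.Walk u v) := {p | p.IsPath ∧ walkWeight w p ≤ B u v}

/-- Feasibility for the LP relaxation of the path-based model (PB). -/
def PBFeasible (G : SimpleGraph V) (w : Sym2 V → ℝ) (K : Set (V × V)) (B : V → V → ℝ)
    (x : Sym2 V → ℝ) (y : ∀ u v : V, G.Walk u v → ℝ) : Prop :=
  (∀ e, 0 ≤ x e ∧ x e ≤ 1) ∧
  (∀ (u v : V) (p : G.Walk u v), 0 ≤ y u v p ∧ y u v p ≤ 1) ∧
  (∀ uv ∈ K, 1 ≤ ∑ᶠ p ∈ pathSet G w B uv.1 uv.2, y uv.1 uv.2 p) ∧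
  (∀ uv ∈ K, ∀ e : Sym2 V,
    ∑ᶠ p ∈ {p ∈ pathSet G w B uv.1 uv.2 | e ∈ p.edges}, y uv.1 uv.2 p ≤ x e)

/-- The original (degree-4) vertices of the subdivided `K₅`. -/
def origV : Set (ZMod 10) := {0, 2, 4, 6, 8}

/-- `K₅` with every edge of a fixed Hamilton cycle subdivided once. -/
def subK5 : SimpleGraph (ZMod 10) :=
  SimpleGraph.fromRel (fun i j =>
    j = i + 1 ∨ (i ∈ origV ∧ j ∈ origV ∧ j ≠ i + 2 ∧ i ≠ j + 2))

theorem walkWeight_one {G : SimpleGraph V} {u v : V} (p : G.Walk u v) :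
    walkWeight (fun _ => (1 : ℝ)) p = p.length := by
  simp [walkWeight]

theorem pathSet_finite [Finite V] (G : SimpleGraph V) (w : Sym2 V → ℝ) (B : V → V → ℝ)
    (u v : V) : (pathSet G w B u v).Finite := by
  classical
  have := Fintype.ofFinite V
  exact (Set.finite_range fun p : G.Path u v => (p : G.Walk u v)).subset
    fun p hp => ⟨⟨p, hp.1⟩, rfl⟩

namespace SimpleGraph.Walk

variable {G : SimpleGraph V}

theorem abs_sub_le_length (f : V → ℤ) {u v : V} (p : G.Walk u v)
    (hf : ∀ a b, s(a, b) ∈ p.edges → |f a - f b| ≤ 1) : |f v - f u| ≤ p.length := by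
  induction p with
  | nil => simp
  | @cons a b _ h q ih =>
    have hab := hf a b (by simp)
    have hq := ih fun c d hcd => hf c d (by simp [hcd])
    rw [length_cons, Nat.cast_succ]
    calc |f _ - f a| ≤ |f _ - f b| + |f b - f a| := abs_sub_le _ _ _
      _ ≤ q.length + 1 := by rw [abs_sub_comm] at hab; gcongr

end SimpleGraph.Walk

namespace PBFeasible

variable {G : SimpleGraph V} {w : Sym2 V → ℝ} {K : Set (V × V)} {B : V → V → ℝ}
  {x : Sym2 V → ℝ} {y : ∀ u v : V, G.Walk u v → ℝ}

theorem one_le_sum_of_forall_exists_mem (h : PBFeasible G w K B x y) {uv : V × V}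
    (huv : uv ∈ K) (hfin : (pathSet G w B uv.1 uv.2).Finite) (S : Finset (Sym2 V))
    (hS : ∀ p ∈ pathSet G w B uv.1 uv.2, ∃ e ∈ S, e ∈ p.edges) :
    1 ≤ ∑ e ∈ S, x e := by
  classical
  obtain ⟨-, hy, hflow, hcap⟩ := h
  set P := hfin.toFinset
  have hcap' : ∀ e, ∑ p ∈ P with e ∈ p.edges, y _ _ p ≤ x e := fun e => by
    rw [← finsum_mem_coe_finset, Finset.coe_filter]
    simpa [P] using hcap uv huv e
  calc 1 ≤ ∑ p ∈ P, y _ _ p := by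
        rw [← finsum_mem_coe_finset, hfin.coe_toFinset]
        exact hflow uv huv
    _ ≤ ∑ p ∈ P, ∑ e ∈ S with e ∈ p.edges, y _ _ p := by
      refine Finset.sum_le_sum fun p hp => ?_
      obtain ⟨e, heS, hep⟩ := hS p (hfin.mem_toFinset.mp hp)
      exact Finset.single_le_sum (f := fun _ => y _ _ p) (fun _ _ => (hy _ _ p).1)
        (Finset.mem_filter.mpr ⟨heS, hep⟩)
    _ = ∑ e ∈ S, ∑ p ∈ P with e ∈ p.edges, y _ _ p := by
      simp only [Finset.sum_filter]
      exact Finset.sum_comm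
    _ ≤ ∑ e ∈ S, x e := Finset.sum_le_sum fun e _ => hcap' e

theorem one_le_add_of_forall_adj (h : PBFeasible G w K B x y) {a s b : V} (hsb : (s, b) ∈ K)
    (hne : s ≠ b) (hfin : (pathSet G w B s b).Finite)
    (hnbr : ∀ v, G.Adj s v → v = a ∨ v = b) : 1 ≤ x s(a, s) + x s(s, b) := by
  classical
  have hS : 1 ≤ ∑ e ∈ {s(a, s), s(s, b)}, x e :=
    h.one_le_sum_of_forall_exists_mem hsb hfin _ fun p _ => by
      have hnil := p.not_nil_of_ne hne
      have hfirst := p.mk_start_snd_mem_edges hnil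
      rcases hnbr _ (p.adj_snd hnil) with ha | hb
      · exact ⟨s(a, s), by simp, by rwa [Sym2.eq_swap, ← ha]⟩
      · exact ⟨s(s, b), by simp, by rwa [hb] at hfirst⟩
  by_cases he : s(a, s) = s(s, b)
  · simp only [he, Finset.pair_eq_singleton, Finset.sum_singleton] at hS ⊢
    linarith [(h.1 s(s, b)).1]
  · rwa [Finset.sum_pair he] at hS

end PBFeasible

instance : DecidablePred (· ∈ origV) := fun i =>
  inferInstanceAs (Decidable (i = 0 ∨ i = 2 ∨ i = 4 ∨ i = 6 ∨ i = 8))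

instance : DecidableRel subK5.Adj := fun i j =>
  inferInstanceAs (Decidable (i ≠ j ∧
    ((j = i + 1 ∨ (i ∈ origV ∧ j ∈ origV ∧ j ≠ i + 2 ∧ i ≠ j + 2)) ∨
      (i = j + 1 ∨ (j ∈ origV ∧ i ∈ origV ∧ i ≠ j + 2 ∧ j ≠ i + 2)))))

namespace subK5

def cycleEdges : Finset (Sym2 (ZMod 10)) :=
  {s(0, 1), s(1, 2), s(2, 3), s(3, 4), s(4, 5), s(5, 6), s(6, 7), s(7, 8), s(8, 9), s(9, 0)}

theorem mem_cycleEdges (c : ZMod 10) : s(c, c + 1) ∈ cycleEdges := by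
  revert c; decide

theorem cycleEdges_subset_edgeFinset : cycleEdges ⊆ subK5.edgeFinset := by decide

def chords : Finset (Sym2 (ZMod 10)) := subK5.edgeFinset \ cycleEdges

theorem sum_cycleEdges (x : Sym2 (ZMod 10) → ℝ) :
    ∑ e ∈ cycleEdges, x e = x s(0, 1) + x s(1, 2) + x s(2, 3) + x s(3, 4) + x s(4, 5) +
      x s(5, 6) + x s(6, 7) + x s(7, 8) + x s(8, 9) + x s(9, 0) := by
  simp +decide [cycleEdges, Finset.sum_insert]
  ring

/-- The distance from `c + 1` to `i` along the cycle with the edge `s(c, c + 1)` deleted. -/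
def cutPosition (c i : ZMod 10) : ℤ := (i - c - 1).val

theorem abs_cutPosition_sub_le {c a b : ZMod 10} (hab : s(a, b) ∈ cycleEdges)
    (hne : s(a, b) ≠ s(c, c + 1)) : |cutPosition c a - cutPosition c b| ≤ 1 := by
  revert c a b; decide

theorem abs_cutPosition_four_sub_zero {c : ZMod 10} (hc : c.val < 4) :
    |cutPosition c 4 - cutPosition c 0| = 6 := by
  revert c; decide

theorem six_le_length_of_forall_mem_cycleEdges {c : ZMod 10} (hc : c.val < 4)
    (p : subK5.Walk 0 4) (hp : ∀ e ∈ p.edges, e ∈ cycleEdges ∧ e ≠ s(c, c + 1)) :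
    6 ≤ p.length := by
  have := p.abs_sub_le_length (cutPosition c) fun a b hab =>
    abs_cutPosition_sub_le (hp _ hab).1 (hp _ hab).2
  rw [abs_cutPosition_four_sub_zero hc] at this
  exact_mod_cast this

theorem exists_mem_edges_of_length_le_five {c : ZMod 10} (hc : c.val < 4)
    (p : subK5.Walk 0 4) (hlen : p.length ≤ 5) :
    ∃ e ∈ insert s(c, c + 1) chords, e ∈ p.edges := by
  by_contra! hp
  refine absurd (six_le_length_of_forall_mem_cycleEdges hc p fun e he => ?_) (by omega)
  have hE : e ∈ subK5.edgeFinset := by simpa using p.edges_subset_edgeSet he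
  constructor
  · by_contra h
    exact hp e (by simp [chords, hE, h]) he
  · rintro rfl
    exact hp _ (Finset.mem_insert_self _ _) he

theorem one_le_add_sum_chords {x : Sym2 (ZMod 10) → ℝ}
    {y : ∀ u v : ZMod 10, subK5.Walk u v → ℝ}
    (h : PBFeasible subK5 (fun _ => (1 : ℝ)) {p | subK5.Adj p.1 p.2}
      (fun u v => 5 * (subK5.dist u v : ℝ)) x y)
    {c : ZMod 10} (hc : c.val < 4) : 1 ≤ x s(c, c + 1) + ∑ e ∈ chords, x e := by
  rw [← Finset.sum_insert (s := chords) (by simp [chords, mem_cycleEdges])]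
  refine h.one_le_sum_of_forall_exists_mem (uv := (0, 4)) (by decide) (pathSet_finite ..) _
    fun p hp => exists_mem_edges_of_length_le_five hc p ?_
  have hw : (p.length : ℝ) ≤ 5 * (subK5.dist 0 4 : ℕ) := walkWeight_one p ▸ hp.2
  rw [SimpleGraph.dist_eq_one_iff_adj.mpr (by decide : subK5.Adj 0 4)] at hw
  exact_mod_cast (by simpa using hw)

end subK5

/-- In the subdivided `K₅` with `α = 5` and `K` the set of adjacent pairs, every feasible
fractional solution of the path-based LP relaxation (PB) has objective value strictly
greater than `5`. -/
theorem subK5_PB_value_gt_five :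
    ∀ (x : Sym2 (ZMod 10) → ℝ) (y : ∀ u v : ZMod 10, subK5.Walk u v → ℝ),
      PBFeasible subK5 (fun _ => (1 : ℝ)) {p | subK5.Adj p.1 p.2}
        (fun u v => 5 * (subK5.dist u v : ℝ)) x y →
      5 < ∑ᶠ e ∈ subK5.edgeSet, (1 : ℝ) * x e := by
  intro x y hfeas
  have hobj : ∑ᶠ e ∈ subK5.edgeSet, 1 * x e =
      ∑ e ∈ subK5.cycleEdges, x e + ∑ e ∈ subK5.chords, x e := by
    rw [← SimpleGraph.coe_edgeFinset, finsum_mem_coe_finset, add_comm, subK5.chords,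
      Finset.sum_sdiff subK5.cycleEdges_subset_edgeFinset]
    simp
  have hpair : ∀ a s b, subK5.Adj s b → (∀ v, subK5.Adj s v → v = a ∨ v = b) →
      1 ≤ x s(a, s) + x s(s, b) := fun a s b hsb =>
    hfeas.one_le_add_of_forall_adj hsb hsb.ne (pathSet_finite ..)
  have h01 : 1 ≤ x s(0, 1) + ∑ e ∈ subK5.chords, x e :=
    subK5.one_le_add_sum_chords (c := 0) hfeas (by decide)
  have h12 : 1 ≤ x s(1, 2) + ∑ e ∈ subK5.chords, x e :=
    subK5.one_le_add_sum_chords (c := 1) hfeas (by decide)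
  rw [hobj, subK5.sum_cycleEdges]
  linarith [hpair 0 1 2 (by decide) (by decide), hpair 2 3 4 (by decide) (by decide),
    hpair 4 5 6 (by decide) (by decide), hpair 6 7 8 (by decide) (by decide),
    hpair 8 9 0 (by decide) (by decide)]

end
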